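/- arXiv:2406.15282 — 6 statements merged into one kernel-verified Lean document; each statement's English description precedes it below -/
import Mathlib

section
/- Let S be a balanced scoring function and let X be uniform on [0,1]. Then for every fixed s ∈ [0,∞], the map α ↦ Pr(S(X, α) ≥ s) is monotonically non-increasing on [0,∞). -/
open MeasureTheory
open scoped ENNReal

/-- The uniform probability measure on `[0,1]`. -/
noncomputable def unifIcc : Measure ℝ := volume.restrict (Set.Icc (0:ℝ) 1)

/-- A balanced scoring function: a measurable map `S : [0,1] × ℝ≥0 → [0,∞]`
(here defined on all of `ℝ × ℝ`, with conditions imposed only for the relevant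
arguments) such that (1) for every `α ≥ 0` the distribution of `S(X, α)` for `X`
uniform on `[0,1]` has no point masses, and (2) for every `n ≥ 1` and nonnegative
stakes `α₁, …, αₙ` with positive sum, if `X₁, …, Xₙ` are i.i.d. uniform on `[0,1]`
then the probability that `S(Xⱼ, αⱼ)` is the strict minimum equals `αⱼ / Σᵢ αᵢ`. -/
structure BalancedScoringFunction where
  S : ℝ → ℝ → ℝ≥0∞
  measurable : Measurable fun p : ℝ × ℝ => S p.1 p.2
  no_atoms : ∀ α : ℝ, 0 ≤ α → ∀ c : ℝ≥0∞, unifIcc.map (fun x => S x α) {c} = 0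
  balanced : ∀ n : ℕ, 1 ≤ n → ∀ α : Fin n → ℝ, (∀ i, 0 ≤ α i) → 0 < ∑ i, α i →
    ∀ j : Fin n,
      (Measure.pi fun _ : Fin n => unifIcc)
          {x : Fin n → ℝ | ∀ i, i ≠ j → S (x j) (α j) < S (x i) (α i)} =
        ENNReal.ofReal (α j / ∑ i, α i)


instance : IsProbabilityMeasure unifIcc := ⟨by simp [unifIcc, Real.volume_Icc]⟩

lemma BalancedScoringFunction.msr (B : BalancedScoringFunction) (c : ℝ) : Measurable fun y => B.S y c :=
  B.measurable.comp (measurable_id.prodMk measurable_const)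

lemma moment_eq (B : BalancedScoringFunction) {α₁ α₂ : ℝ} (h1 : 0 ≤ α₁) (h2 : 0 < α₂) (k : ℕ) :
    ∫⁻ y, (unifIcc {w | B.S y α₂ < B.S w α₁}) ^ k ∂unifIcc
      = ENNReal.ofReal (α₂ / (α₂ + k * α₁)) := by
  classical
  set a : Fin (k+1) → ℝ := fun i => if i = 0 then α₂ else α₁ with ha
  have hsum : ∑ i, a i = α₂ + k * α₁ := by
    rw [Fin.sum_univ_succ]
    simp [a, Fin.succ_ne_zero, mul_comm]
  have hbal := B.balanced (k+1) (by omega) a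
    (fun i => by by_cases h : i = 0 <;> simp [a, h] <;> linarith)
    (by rw [hsum]; positivity) 0
  rw [hsum] at hbal
  simp only [a, if_pos rfl] at hbal
  set F : Set (ℝ × (Fin k → ℝ)) := {p | ∀ j : Fin k, B.S p.1 α₂ < B.S (p.2 j) α₁} with hFdef
  have hF : MeasurableSet F := by
    have : F = ⋂ j : Fin k, {p : ℝ × (Fin k → ℝ) | B.S p.1 α₂ < B.S (p.2 j) α₁} := by
      ext p; simp [F, Set.mem_iInter]
    rw [this]
    exact MeasurableSet.iInter fun j => measurableSet_lt
      ((B.msr α₂).comp measurable_fst)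
      ((B.msr α₁).comp ((measurable_pi_apply j).comp measurable_snd))
  have hmp := measurePreserving_piFinSuccAbove (fun _ : Fin (k+1) => unifIcc) 0
  have hpre : (MeasurableEquiv.piFinSuccAbove (fun _ : Fin (k+1) => ℝ) 0) ⁻¹' F
      = {x : Fin (k+1) → ℝ | ∀ i, i ≠ 0 → B.S (x 0) α₂ < B.S (x i) (if i = 0 then α₂ else α₁)} := by
    ext x
    simp only [Set.mem_preimage, MeasurableEquiv.piFinSuccAbove_apply, F, Set.mem_setOf_eq,
      Fin.removeNth, Fin.succAbove_zero]
    constructor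
    · intro h i hi
      obtain ⟨j, rfl⟩ := Fin.eq_succ_of_ne_zero hi
      simpa [Fin.succ_ne_zero, Fin.tail] using h j
    · intro h j
      simpa [Fin.succ_ne_zero, Fin.tail] using h j.succ (Fin.succ_ne_zero j)
  have key : (Measure.pi fun _ : Fin (k+1) => unifIcc)
      ((MeasurableEquiv.piFinSuccAbove (fun _ : Fin (k+1) => ℝ) 0) ⁻¹' F)
      = (unifIcc.prod (Measure.pi fun _ : Fin k => unifIcc)) F :=
    hmp.measure_preimage hF.nullMeasurableSet
  rw [hpre] at key
  rw [← hbal, key, Measure.prod_apply hF]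
  apply lintegral_congr
  intro y
  have : Prod.mk y ⁻¹' F = Set.pi Set.univ (fun _ : Fin k => {w | B.S y α₂ < B.S w α₁}) := by
    ext z; simp [F, Set.mem_pi]
  rw [this, Measure.pi_pi]
  simp

open intervalIntegral

lemma monomial_weight {θ : ℝ} (hθ : 1 < θ) (i : ℕ) (cf : ℝ) :
    ∫ u in (0:ℝ)..1, (cf * u ^ i) * (θ * u ^ (θ - 1)) = cf * (θ / (θ + i)) := by
  have hi : (0:ℝ) ≤ i := Nat.cast_nonneg i
  have hθi : (0:ℝ) < θ + i := by linarith
  have hpt : ∀ u ∈ Set.uIcc (0:ℝ) 1, (cf * u ^ i) * (θ * u ^ (θ - 1))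
      = (cf * θ) * u ^ (θ + i - 1) := by
    intro u hu
    rw [Set.uIcc_of_le (by norm_num)] at hu
    rcases eq_or_lt_of_le hu.1 with h0 | h0
    · rw [← h0]
      rw [Real.zero_rpow (ne_of_gt (show (0:ℝ) < θ - 1 by linarith)),
        Real.zero_rpow (ne_of_gt (show (0:ℝ) < θ + i - 1 by linarith))]
      ring
    · rw [show θ + i - 1 = (θ - 1) + i by ring, Real.rpow_add h0, Real.rpow_natCast]
      ring
  rw [integral_congr hpt, intervalIntegral.integral_const_mul,
    integral_rpow (Or.inl (by linarith)), Real.one_rpow,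
    Real.zero_rpow (ne_of_gt (show (0:ℝ) < θ + i - 1 + 1 by linarith)),
    show θ + i - 1 + 1 = θ + i by ring]
  field_simp
  ring

lemma key_bound (μ : Measure ℝ) [IsProbabilityMeasure μ] (V : ℝ → ℝ≥0∞)
    (hVm : Measurable V) (hV1 : ∀ x, V x ≤ 1) {θ : ℝ} (hθ : 1 < θ)
    (hm : ∀ k : ℕ, ∫⁻ x, V x ^ k ∂μ = ENNReal.ofReal (θ / (θ + k)))
    (t : ℝ≥0∞) : μ {x | V x ≤ t} ≤ t := by
  rcases le_or_gt 1 t with h | ht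
  · exact le_trans prob_le_one h
  have hθ0 : (0:ℝ) < θ := by linarith
  have htop : t ≠ ⊤ := ht.ne_top
  set tr := t.toReal with htr
  have htr0 : 0 ≤ tr := ENNReal.toReal_nonneg
  have htr1 : tr < 1 := by
    rw [htr, ← ENNReal.toReal_one]
    exact (ENNReal.toReal_lt_toReal htop ENNReal.one_ne_top).mpr ht
  set W : ℝ → ℝ := fun x => (V x).toReal with hWdef
  have hWm : Measurable W := hVm.ennreal_toReal
  have hne : ∀ x, V x ≠ ⊤ := fun x => (lt_of_le_of_lt (hV1 x) (by norm_num)).ne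
  have hW0 : ∀ x, 0 ≤ W x := fun x => ENNReal.toReal_nonneg
  have hW1 : ∀ x, W x ≤ 1 := fun x => by
    rw [hWdef, ← ENNReal.toReal_one]
    exact ENNReal.toReal_mono ENNReal.one_ne_top (hV1 x)
  -- real moments
  have hmR : ∀ k : ℕ, ∫ x, W x ^ k ∂μ = θ / (θ + k) := by
    intro k
    have h1 : (fun x => ENNReal.ofReal (W x ^ k)) = fun x => V x ^ k := by
      funext x
      rw [ENNReal.ofReal_pow ENNReal.toReal_nonneg, ENNReal.ofReal_toReal (hne x)]
    rw [MeasureTheory.integral_eq_lintegral_of_nonneg_ae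
        (Filter.Eventually.of_forall fun x => pow_nonneg ENNReal.toReal_nonneg k)
        ((hWm.pow_const k).aestronglyMeasurable), h1, hm k,
      ENNReal.toReal_ofReal (div_nonneg hθ0.le (by positivity))]
  have hA : MeasurableSet {x | V x ≤ t} := measurableSet_le hVm measurable_const
  have hfinA : μ {x | V x ≤ t} ≠ ⊤ := (measure_lt_top _ _).ne
  suffices hgoal : (μ {x | V x ≤ t}).toReal ≤ tr by
    calc μ {x | V x ≤ t} = ENNReal.ofReal (μ {x | V x ≤ t}).toReal :=
          (ENNReal.ofReal_toReal hfinA).symm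
      _ ≤ ENNReal.ofReal tr := ENNReal.ofReal_le_ofReal hgoal
      _ = t := ENNReal.ofReal_toReal htop
  refine le_of_forall_pos_le_add fun ε hε => ?_
  set δ : ℝ := min (ε/3) ((1 - tr)/2) with hδdef
  have hδ0 : 0 < δ := lt_min (by linarith) (by linarith)
  have hδε : δ ≤ ε/3 := min_le_left _ _
  set c : ℝ := tr + δ with hcdef
  have hc0 : 0 < c := by positivity
  have hc1 : c < 1 := by
    have := min_le_right (ε/3) ((1 - tr)/2)
    simp only [hcdef, hδdef]; linarith
  set f : ℝ → ℝ := fun u => min 1 (max 0 ((c - u)/δ)) with hfdef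
  have hfc : Continuous f := by
    apply continuous_const.min
    exact continuous_const.max ((continuous_const.sub continuous_id).div_const δ)
  have hf0 : ∀ u, 0 ≤ f u := fun u => le_min zero_le_one (le_max_left _ _)
  have hf1 : ∀ u, f u ≤ 1 := fun u => min_le_left _ _
  have hfone : ∀ u ≤ tr, f u = 1 := by
    intro u hu
    have : (1:ℝ) ≤ (c - u)/δ := (le_div_iff₀ hδ0).mpr (by simp only [hcdef]; linarith)
    exact min_eq_left (le_trans this (le_max_right _ _))
  have hfzero : ∀ u, c ≤ u → f u = 0 := by
    intro u hu
    have h1 : (c - u)/δ ≤ 0 := div_nonpos_of_nonpos_of_nonneg (by linarith) hδ0.le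
    rw [hfdef]
    simp only [max_eq_left h1, min_eq_right zero_le_one]
  -- polynomial approximation
  obtain ⟨p, hp⟩ := exists_polynomial_near_of_continuousOn 0 1 f hfc.continuousOn (ε/3)
    (by linarith)
  -- integrabilities
  have hWmem : ∀ x, W x ∈ Set.Icc (0:ℝ) 1 := fun x => ⟨hW0 x, hW1 x⟩
  have hintf : Integrable (fun x => f (W x)) μ := by
    refine (integrable_const (1:ℝ)).mono'
      ((hfc.measurable.comp hWm).aestronglyMeasurable) (ae_of_all _ fun x => ?_)
    rw [Real.norm_eq_abs, abs_of_nonneg (hf0 _)]; exact hf1 _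
  obtain ⟨C, hC⟩ := (isCompact_Icc (a := (0:ℝ)) (b := 1)).exists_bound_of_continuousOn
    (p.continuous_aeval.continuousOn)
  have hintp : Integrable (fun x => p.eval (W x)) μ := by
    refine (integrable_const C).mono'
      ((p.continuous_aeval.measurable.comp hWm).aestronglyMeasurable)
      (ae_of_all _ fun x => ?_)
    simpa using hC (W x) (hWmem x)
  -- step 1
  have step1 : (μ {x | V x ≤ t}).toReal ≤ ∫ x, f (W x) ∂μ := by
    change μ.real {x | V x ≤ t} ≤ _
    rw [← MeasureTheory.integral_indicator_one hA]
    refine integral_mono ((integrable_const (1:ℝ)).indicator hA) hintf fun x => ?_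
    by_cases hx : V x ≤ t
    · have hx' : x ∈ {x | V x ≤ t} := hx
      rw [Set.indicator_of_mem hx', Pi.one_apply]
      have hWx : W x ≤ tr := ENNReal.toReal_mono htop hx
      rw [hfone _ hWx]
    · have hx' : x ∉ {x | V x ≤ t} := hx
      rw [Set.indicator_of_notMem hx']
      exact hf0 _
  -- step 2
  have step2 : ∫ x, f (W x) ∂μ ≤ (∫ x, p.eval (W x) ∂μ) + ε/3 := by
    have hpt : ∀ x, f (W x) ≤ p.eval (W x) + ε/3 := by
      intro x
      have := abs_lt.mp (hp (W x) (hWmem x))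
      linarith [this.1]
    calc ∫ x, f (W x) ∂μ ≤ ∫ x, (p.eval (W x) + ε/3) ∂μ :=
          integral_mono hintf (hintp.add (integrable_const _)) hpt
      _ = (∫ x, p.eval (W x) ∂μ) + ε/3 := by
          rw [integral_add hintp (integrable_const _)]
          simp
  -- step 3 : ∫ p(W) = Σ coeff * moment
  have hintWk : ∀ i : ℕ, Integrable (fun x => W x ^ i) μ := by
    intro i
    refine (integrable_const (1:ℝ)).mono'
      ((hWm.pow_const i).aestronglyMeasurable) (ae_of_all _ fun x => ?_)
    rw [Real.norm_eq_abs, abs_of_nonneg (pow_nonneg (hW0 x) i)]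
    exact pow_le_one₀ (hW0 x) (hW1 x)
  have step3 : ∫ x, p.eval (W x) ∂μ
      = ∑ i ∈ Finset.range (p.natDegree + 1), p.coeff i * (θ / (θ + i)) := by
    have : ∀ x, p.eval (W x) = ∑ i ∈ Finset.range (p.natDegree + 1), p.coeff i * W x ^ i :=
      fun x => Polynomial.eval_eq_sum_range _
    simp_rw [this]
    rw [integral_finset_sum _ (fun i _ => (hintWk i).const_mul _)]
    exact Finset.sum_congr rfl fun i _ => by
      rw [MeasureTheory.integral_const_mul, hmR i]
  -- step 4 : Σ coeff * moment = weighted integral of p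
  have wInt : ∀ g : ℝ → ℝ, ContinuousOn g (Set.uIcc (0:ℝ) 1) →
      IntervalIntegrable (fun u => g u * (θ * u ^ (θ - 1))) volume 0 1 := by
    intro g hg
    exact ((intervalIntegrable_rpow (Or.inl (by linarith))).const_mul θ).continuousOn_mul hg
  have step4 : ∑ i ∈ Finset.range (p.natDegree + 1), p.coeff i * (θ / (θ + i))
      = ∫ u in (0:ℝ)..1, p.eval u * (θ * u ^ (θ - 1)) := by
    have hpt : ∀ u ∈ Set.uIcc (0:ℝ) 1, p.eval u * (θ * u ^ (θ - 1))
        = ∑ i ∈ Finset.range (p.natDegree + 1), (p.coeff i * u ^ i) * (θ * u ^ (θ - 1)) := by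
      intro u _
      rw [Polynomial.eval_eq_sum_range, Finset.sum_mul]
    rw [integral_congr hpt, intervalIntegral.integral_finset_sum (fun i _ => by
      refine wInt _ ?_
      exact (continuous_const.mul (continuous_pow i)).continuousOn)]
    exact (Finset.sum_congr rfl fun i _ => (monomial_weight hθ i (p.coeff i))).symm
  -- step 5 : weighted integral of p ≤ weighted integral of f + ε/3
  have hwnn : ∀ u : ℝ, 0 ≤ u → 0 ≤ θ * u ^ (θ - 1) :=
    fun u hu => mul_nonneg hθ0.le (Real.rpow_nonneg hu _)
  have hIf : IntervalIntegrable (fun u => f u * (θ * u ^ (θ - 1))) volume 0 1 :=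
    wInt f hfc.continuousOn
  have hIfe : IntervalIntegrable (fun u => (f u + ε/3) * (θ * u ^ (θ - 1))) volume 0 1 :=
    wInt _ (hfc.continuousOn.add continuousOn_const)
  have hIp : IntervalIntegrable (fun u => p.eval u * (θ * u ^ (θ - 1))) volume 0 1 :=
    wInt _ (p.continuous_aeval.continuousOn)
  have hIw : IntervalIntegrable (fun u => θ * u ^ (θ - 1)) volume 0 1 :=
    (intervalIntegrable_rpow (Or.inl (by linarith))).const_mul θ
  have step5 : ∫ u in (0:ℝ)..1, p.eval u * (θ * u ^ (θ - 1))
      ≤ (∫ u in (0:ℝ)..1, f u * (θ * u ^ (θ - 1))) + ε/3 := by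
    have hmono : ∫ u in (0:ℝ)..1, p.eval u * (θ * u ^ (θ - 1))
        ≤ ∫ u in (0:ℝ)..1, (f u + ε/3) * (θ * u ^ (θ - 1)) := by
      refine integral_mono_on (by norm_num) hIp hIfe fun u hu => ?_
      have := abs_lt.mp (hp u hu)
      exact mul_le_mul_of_nonneg_right (by linarith [this.2]) (hwnn u hu.1)
    have hw1 : ∫ u in (0:ℝ)..1, θ * u ^ (θ - 1) = 1 := by
      have h := monomial_weight hθ 0 1
      simp only [pow_zero, mul_one, one_mul, Nat.cast_zero, add_zero, div_self hθ0.ne'] at h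
      exact h
    have hsplit : ∫ u in (0:ℝ)..1, (f u + ε/3) * (θ * u ^ (θ - 1))
        = (∫ u in (0:ℝ)..1, f u * (θ * u ^ (θ - 1))) + ε/3 := by
      have : (fun u => (f u + ε/3) * (θ * u ^ (θ - 1)))
          = fun u => f u * (θ * u ^ (θ - 1)) + (ε/3) * (θ * u ^ (θ - 1)) := by
        funext u; ring
      rw [this, intervalIntegral.integral_add hIf (hIw.const_mul _),
        intervalIntegral.integral_const_mul, hw1, mul_one]
    linarith [hmono, hsplit.le, hsplit.ge]
  -- step 6 : weighted integral of f ≤ c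
  have step6 : ∫ u in (0:ℝ)..1, f u * (θ * u ^ (θ - 1)) ≤ c := by
    have hIl : IntervalIntegrable (fun u => f u * (θ * u ^ (θ - 1))) volume 0 c :=
      hIf.mono_set (by rw [Set.uIcc_of_le hc0.le, Set.uIcc_of_le (by norm_num)]
                       exact Set.Icc_subset_Icc le_rfl hc1.le)
    have hIr : IntervalIntegrable (fun u => f u * (θ * u ^ (θ - 1))) volume c 1 :=
      hIf.mono_set (by rw [Set.uIcc_of_le hc1.le, Set.uIcc_of_le (by norm_num)]
                       exact Set.Icc_subset_Icc hc0.le le_rfl)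
    have hIwl : IntervalIntegrable (fun u => θ * u ^ (θ - 1)) volume 0 c :=
      (intervalIntegrable_rpow (Or.inl (by linarith))).const_mul θ
    rw [← intervalIntegral.integral_add_adjacent_intervals hIl hIr]
    have hright : ∫ u in c..1, f u * (θ * u ^ (θ - 1)) = 0 := by
      rw [show (0:ℝ) = ∫ u in c..1, (0:ℝ) by simp]
      refine integral_congr fun u hu => ?_
      rw [Set.uIcc_of_le hc1.le] at hu
      rw [hfzero u hu.1, zero_mul]
    have hleft : ∫ u in (0:ℝ)..c, f u * (θ * u ^ (θ - 1)) ≤ c := by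
      have h1 : ∫ u in (0:ℝ)..c, f u * (θ * u ^ (θ - 1)) ≤ ∫ u in (0:ℝ)..c, θ * u ^ (θ - 1) := by
        refine integral_mono_on hc0.le hIl hIwl fun u hu => ?_
        have := hwnn u hu.1
        nlinarith [hf1 u, hf0 u]
      have h2 : ∫ u in (0:ℝ)..c, θ * u ^ (θ - 1) = c ^ θ := by
        rw [intervalIntegral.integral_const_mul, integral_rpow (Or.inl (by linarith)),
          show θ - 1 + 1 = θ by ring, Real.zero_rpow (ne_of_gt hθ0)]
        field_simp
        ring
      have h3 : c ^ θ ≤ c := by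
        calc c ^ θ ≤ c ^ (1:ℝ) :=
              Real.rpow_le_rpow_of_exponent_ge hc0 hc1.le (by linarith)
          _ = c := Real.rpow_one c
      linarith
    linarith [hright]
  calc (μ {x | V x ≤ t}).toReal ≤ ∫ x, f (W x) ∂μ := step1
    _ ≤ (∫ x, p.eval (W x) ∂μ) + ε/3 := by linarith [step2]
    _ = (∫ u in (0:ℝ)..1, p.eval u * (θ * u ^ (θ - 1))) + ε/3 := by rw [step3, step4]
    _ ≤ ((∫ u in (0:ℝ)..1, f u * (θ * u ^ (θ - 1))) + ε/3) + ε/3 := by linarith [step5]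
    _ ≤ (c + ε/3) + ε/3 := by linarith [step6]
    _ ≤ tr + ε := by simp only [hcdef]; linarith

/-- For a balanced scoring function `S`, `X` uniform on `[0,1]`, and
every fixed `s ∈ [0,∞]`, the map `α ↦ Pr(S(X, α) ≥ s)` is monotonically
non-increasing on `[0, ∞)`. -/
theorem balanced_tail_prob_antitone (B : BalancedScoringFunction) (s : ℝ≥0∞) :
    ∀ α₁ α₂ : ℝ, 0 ≤ α₁ → α₁ ≤ α₂ →
      unifIcc {x : ℝ | s ≤ B.S x α₂} ≤ unifIcc {x : ℝ | s ≤ B.S x α₁} := by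
  intro α₁ α₂ hα₁ hle
  rcases eq_or_lt_of_le hle with rfl | hlt
  · exact le_rfl
  have hα₂ : 0 < α₂ := lt_of_le_of_lt hα₁ hlt
  set V : ℝ → ℝ≥0∞ := fun y => unifIcc {w | B.S y α₂ < B.S w α₁} with hVdef
  have hVm : Measurable V := by
    have hs : MeasurableSet {p : ℝ × ℝ | B.S p.1 α₂ < B.S p.2 α₁} :=
      measurableSet_lt ((B.msr α₂).comp measurable_fst) ((B.msr α₁).comp measurable_snd)
    exact measurable_measure_prodMk_left hs
  have hV1 : ∀ x, V x ≤ 1 := fun x => prob_le_one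
  set t := unifIcc {x | s ≤ B.S x α₁} with htdef
  have hsub : {x | s ≤ B.S x α₂} ⊆ {x | V x ≤ t} := by
    intro x hx
    have hss : {w | B.S x α₂ < B.S w α₁} ⊆ {w | s ≤ B.S w α₁} := by
      intro w hw
      simp only [Set.mem_setOf_eq] at hx hw ⊢
      exact le_of_lt (lt_of_le_of_lt hx hw)
    exact measure_mono hss
  refine le_trans (measure_mono hsub) ?_
  rcases eq_or_lt_of_le hα₁ with h0 | h1pos
  · -- α₁ = 0
    rcases le_or_gt 1 t with h | ht
    · exact le_trans prob_le_one h
    have hone : ∫⁻ x, V x ∂unifIcc = 1 := by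
      have hm1 := moment_eq B hα₁ hα₂ 1
      simp only [pow_one] at hm1
      rw [show (∫⁻ x, V x ∂unifIcc)
          = ∫⁻ y, unifIcc {w | B.S y α₂ < B.S w α₁} ∂unifIcc from rfl, hm1, ← h0]
      simp [div_self hα₂.ne']
    have hsub2 : ∫⁻ x, (1 - V x) ∂unifIcc = 0 := by
      rw [lintegral_sub hVm (by rw [hone]; exact ENNReal.one_ne_top)
        (Filter.Eventually.of_forall hV1), lintegral_one, measure_univ, hone, tsub_self]
    have hae : ∀ᵐ x ∂unifIcc, V x = 1 := by
      have h2 := (lintegral_eq_zero_iff (measurable_const.sub hVm)).mp hsub2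
      filter_upwards [h2] with x hx
      exact le_antisymm (hV1 x) (tsub_eq_zero_iff_le.mp hx)
    have hzero : unifIcc {x | ¬ V x = 1} = 0 := by
      rw [← MeasureTheory.ae_iff]; exact hae
    calc unifIcc {x | V x ≤ t} ≤ unifIcc {x | ¬ V x = 1} := by
          refine measure_mono fun x hx => ?_
          exact fun h => absurd (h ▸ hx : (1:ℝ≥0∞) ≤ t) (not_le.mpr ht)
      _ = 0 := hzero
      _ ≤ t := zero_le
  · -- 0 < α₁
    have hθ : 1 < α₂ / α₁ := (one_lt_div h1pos).mpr hlt
    refine key_bound unifIcc V hVm hV1 hθ (fun k => ?_) t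
    rw [moment_eq B hα₁ hα₂ k]
    congr 1
    have hden1 : (0:ℝ) < α₂ + k * α₁ :=
      add_pos_of_pos_of_nonneg hα₂ (mul_nonneg (Nat.cast_nonneg k) hα₁)
    have hden2 : (0:ℝ) < α₂ / α₁ + k :=
      add_pos_of_pos_of_nonneg (div_pos hα₂ h1pos) (Nat.cast_nonneg k)
    rw [div_eq_div_iff hden1.ne' hden2.ne']
    field_simp
end

section
/- Let κ = (3 − √5)/2 be the smaller root of 1 − 3x + x², let α ∈ (κ, 1), and define the sequence p₀ = 1 and p_t = (α(2−α)p_{t−1} − α(1−α)p_{t−1}²) / ((1−α) + α p_{t−1}) for t ≥ 1. Then for every δ ∈ (0, −(1 − 3α + α²)/(α(2−α))), one has p_t ≥ δ for all t ≥ 0; consequently the series Σ_{t=0}^∞ p_t diverges. -/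
/-- The survival probabilities of the omniscient choice tree:
`p₀ = 1` and `p_t = (α(2-α)p_{t-1} - α(1-α)p_{t-1}²) / ((1-α) + α p_{t-1})`. -/
noncomputable def survivalProb (α : ℝ) : ℕ → ℝ
  | 0 => 1
  | t + 1 =>
      (α * (2 - α) * survivalProb α t - α * (1 - α) * (survivalProb α t) ^ 2) /
        ((1 - α) + α * survivalProb α t)

/-- For `κ = (3-√5)/2` and `α ∈ (κ, 1)`, every
`δ ∈ (0, -(1-3α+α²)/(α(2-α)))` satisfies `p_t ≥ δ` for all `t`, and consequently
the series `Σ_t p_t` diverges. -/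
theorem survivalProb_lower_bound_and_divergence (α : ℝ)
    (hα : α ∈ Set.Ioo ((3 - Real.sqrt 5) / 2) 1) :
    (∀ δ ∈ Set.Ioo (0 : ℝ) (-(1 - 3 * α + α ^ 2) / (α * (2 - α))),
        ∀ t : ℕ, δ ≤ survivalProb α t) ∧
      ¬ Summable (fun t : ℕ => survivalProb α t) := by
  obtain ⟨hκ, h1⟩ := hα
  have hs2 : Real.sqrt 5 ^ 2 = 5 := Real.sq_sqrt (by norm_num)
  have hs0 : (0:ℝ) ≤ Real.sqrt 5 := Real.sqrt_nonneg 5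
  have hs3 : Real.sqrt 5 < 3 := by nlinarith
  have hα0 : 0 < α := lt_of_lt_of_le (by nlinarith) (le_of_lt hκ)
  have hA : 0 < α * (2 - α) := by nlinarith
  have hc : 0 < 3 * α - α ^ 2 - 1 := by
    have h2 : 0 < α - (3 - Real.sqrt 5) / 2 := by linarith
    have h3 : 0 < (3 + Real.sqrt 5) / 2 - α := by nlinarith
    nlinarith [mul_pos h2 h3]
  set D : ℝ := -(1 - 3 * α + α ^ 2) / (α * (2 - α)) with hDdef
  have hD0 : 0 < D := div_pos (by nlinarith) hA
  -- Key induction: D ≤ p_t ≤ 1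
  have key : ∀ t : ℕ, D ≤ survivalProb α t ∧ survivalProb α t ≤ 1 := by
    intro t
    induction t with
    | zero =>
      constructor
      · show D ≤ 1
        rw [hDdef, div_le_one hA]; nlinarith
      · exact le_refl 1
    | succ t ih =>
      obtain ⟨hD, hle1⟩ := ih
      set p := survivalProb α t with hp
      have hp0 : 0 < p := lt_of_lt_of_le hD0 hD
      have hM : 0 < (1 - α) + α * p := by nlinarith
      have hcp : -(1 - 3 * α + α ^ 2) ≤ p * (α * (2 - α)) := (div_le_iff₀ hA).mp hD
      constructor
      · show D ≤ (α * (2 - α) * p - α * (1 - α) * p ^ 2) / ((1 - α) + α * p)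
        rw [hDdef, div_le_div_iff₀ hA hM]
        nlinarith [mul_nonneg (mul_nonneg (by linarith : (0:ℝ) ≤ p * (α * (2 - α)) - -(1 - 3 * α + α ^ 2)) (by nlinarith : (0:ℝ) ≤ 1 - α * p)) (by linarith : (0:ℝ) ≤ 1 - α)]
      · show (α * (2 - α) * p - α * (1 - α) * p ^ 2) / ((1 - α) + α * p) ≤ 1
        rw [div_le_one hM]
        nlinarith [sq_nonneg (p - 1), sq_nonneg p]
  refine ⟨fun δ hδ t => le_trans (le_of_lt hδ.2) (key t).1, ?_⟩
  intro hsum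
  have htend := hsum.tendsto_atTop_zero
  have hb : ∀ t : ℕ, D / 2 ≤ survivalProb α t := fun t =>
    le_trans (by linarith) (key t).1
  have : D / 2 ≤ 0 := ge_of_tendsto' htend hb
  linarith
end

section
/- Let κ = (3 − √5)/2, let α ∈ (0, κ), and define the sequence p₀ = 1 and p_t = (α(2−α)p_{t−1} − α(1−α)p_{t−1}²) / ((1−α) + α p_{t−1}) for t ≥ 1. Then p₁ = α, p₂ = α² · (2 − 2α + α²)/(1 − α + α²), and for every T ≥ 2, p_T ≤ α² · (2 − 2α + α²)/(1 − α + α²) · (α(2−α)/(1−α))^{T−2}. -/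
/-- For `κ = (3-√5)/2` and `α ∈ (0, κ)`, one has `p₁ = α`,
`p₂ = α²(2-2α+α²)/(1-α+α²)`, and for all `T ≥ 2`,
`p_T ≤ α²·(2-2α+α²)/(1-α+α²)·(α(2-α)/(1-α))^{T-2}`. -/
theorem survivalProb_upper_bounds (α : ℝ)
    (hα : α ∈ Set.Ioo (0 : ℝ) ((3 - Real.sqrt 5) / 2)) :
    survivalProb α 1 = α ∧
    survivalProb α 2 = α ^ 2 * (2 - 2 * α + α ^ 2) / (1 - α + α ^ 2) ∧
    ∀ T : ℕ, 2 ≤ T →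
      survivalProb α T ≤
        α ^ 2 * ((2 - 2 * α + α ^ 2) / (1 - α + α ^ 2)) *
          (α * (2 - α) / (1 - α)) ^ (T - 2) := by
  obtain ⟨hα0, hακ⟩ := hα
  have hs5 : Real.sqrt 5 ^ 2 = 5 := Real.sq_sqrt (by norm_num)
  have hs5' : (2:ℝ) ≤ Real.sqrt 5 := by
    nlinarith [Real.sqrt_nonneg 5]
  have hhalf : α < 1/2 := by linarith
  have hq : 0 < 1 - 3*α + α^2 := by
    nlinarith [Real.sqrt_nonneg 5]
  have h1a : (0:ℝ) < 1 - α := by linarith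
  -- p₁ = α
  have hp1 : survivalProb α 1 = α := by
    simp only [survivalProb]
    field_simp
    ring
  -- p₂
  have hden2 : (0:ℝ) < 1 - α + α^2 := by nlinarith
  have hp2 : survivalProb α 2 = α ^ 2 * (2 - 2 * α + α ^ 2) / (1 - α + α ^ 2) := by
    show (α * (2 - α) * survivalProb α 1 - α * (1 - α) * (survivalProb α 1) ^ 2) /
        ((1 - α) + α * survivalProb α 1) = _
    rw [hp1]
    rw [div_eq_div_iff (by nlinarith) (by nlinarith)]
    ring
  -- bounds 0 ≤ p ≤ 1
  have hbdd : ∀ t, 0 ≤ survivalProb α t ∧ survivalProb α t ≤ 1 := by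
    intro t
    induction t with
    | zero => simp [survivalProb]
    | succ n ih =>
      obtain ⟨h0, h1⟩ := ih
      set p := survivalProb α n with hp
      have hden : (0:ℝ) < (1 - α) + α * p := by nlinarith
      have hnum : 0 ≤ α * (2 - α) * p - α * (1 - α) * p ^ 2 := by
        nlinarith [mul_nonneg (mul_nonneg (mul_nonneg hα0.le h1a.le) h0) (sub_nonneg.2 h1),
          mul_nonneg hα0.le h0]
      have hαp : α * p ≤ 1 := by nlinarith
      constructor
      · show 0 ≤ (α * (2 - α) * p - α * (1 - α) * p ^ 2) / ((1 - α) + α * p)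
        exact div_nonneg hnum hden.le
      · show (α * (2 - α) * p - α * (1 - α) * p ^ 2) / ((1 - α) + α * p) ≤ 1
        rw [div_le_one hden]
        nlinarith [mul_nonneg h1a.le (sub_nonneg.2 hαp),
          mul_nonneg (mul_nonneg hα0.le h1a.le) (sq_nonneg p)]
  -- step: p_{t+1} ≤ r * p_t
  have hr0 : 0 ≤ α * (2 - α) / (1 - α) := div_nonneg (by nlinarith) h1a.le
  have hstep : ∀ t, survivalProb α (t+1) ≤ α * (2 - α) / (1 - α) * survivalProb α t := by
    intro t
    obtain ⟨h0, h1⟩ := hbdd t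
    set p := survivalProb α t with hp
    have hden : (0:ℝ) < (1 - α) + α * p := by nlinarith
    show (α * (2 - α) * p - α * (1 - α) * p ^ 2) / ((1 - α) + α * p) ≤ _
    have hrw : α * (2 - α) / (1 - α) * p = (α * (2 - α) * p) / (1 - α) := by ring
    rw [hrw, div_le_div_iff₀ hden h1a]
    nlinarith [mul_nonneg (mul_nonneg hα0.le h0) h0]
  refine ⟨hp1, hp2, ?_⟩
  intro T hT
  induction T, hT using Nat.le_induction with
  | base =>
    simp only [Nat.sub_self, pow_zero, mul_one]
    rw [hp2]; exact le_of_eq (by ring)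
  | succ n hn ih =>
    have h2 : (n + 1) - 2 = (n - 2) + 1 := by omega
    rw [h2, pow_succ]
    calc survivalProb α (n+1) ≤ α * (2 - α) / (1 - α) * survivalProb α n := hstep n
      _ ≤ α * (2 - α) / (1 - α) *
            (α ^ 2 * ((2 - 2 * α + α ^ 2) / (1 - α + α ^ 2)) *
              (α * (2 - α) / (1 - α)) ^ (n - 2)) := by
          exact mul_le_mul_of_nonneg_left ih hr0
      _ = _ := by ring
end

section
/- Let κ = (3 − √5)/2, let α ∈ (0, κ), and define the sequence p₀ = 1 and p_t = (α(2−α)p_{t−1} − α(1−α)p_{t−1}²) / ((1−α) + α p_{t−1}) for t ≥ 1. Then the series S = Σ_{t=0}^∞ p_t converges and satisfies S ≤ (1 − 3α + 3α² − 3α³) / ((1 − 3α + α²)(1 − α + α²)); consequently 1 − 1/S ≤ α · (1 − 2α + α² − α³)/(1 − 3α + 3α² − 3α³). -/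
/-- For `κ = (3-√5)/2` and `α ∈ (0, κ)`, the series `S = Σ_t p_t`
converges, `S ≤ (1-3α+3α²-3α³)/((1-3α+α²)(1-α+α²))`, and consequently
`1 - 1/S ≤ α·(1-2α+α²-α³)/(1-3α+3α²-3α³)`. -/
theorem survivalProb_summable_and_reward_bound (α : ℝ)
    (hα : α ∈ Set.Ioo (0 : ℝ) ((3 - Real.sqrt 5) / 2)) :
    Summable (fun t : ℕ => survivalProb α t) ∧
    (∑' t : ℕ, survivalProb α t) ≤
      (1 - 3 * α + 3 * α ^ 2 - 3 * α ^ 3) /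
        ((1 - 3 * α + α ^ 2) * (1 - α + α ^ 2)) ∧
    1 - 1 / (∑' t : ℕ, survivalProb α t) ≤
      α * ((1 - 2 * α + α ^ 2 - α ^ 3) / (1 - 3 * α + 3 * α ^ 2 - 3 * α ^ 3)) := by
  obtain ⟨hα0, hακ⟩ := hα
  have h5 : Real.sqrt 5 ^ 2 = 5 := Real.sq_sqrt (by norm_num)
  have h5lb : (2 : ℝ) < Real.sqrt 5 := by nlinarith [Real.sqrt_nonneg 5]
  have hαhalf : α < 1 / 2 := by nlinarith
  have hq : 0 < 1 - 3 * α + α ^ 2 := by nlinarith [Real.sqrt_nonneg 5]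
  have h1α : 0 < 1 - α := by linarith
  have hden2 : 0 < 1 - α + α ^ 2 := by nlinarith
  have hN : 0 < 1 - 3 * α + 3 * α ^ 2 - 3 * α ^ 3 := by nlinarith
  set r : ℝ := α * (2 - α) / (1 - α) with hrdef
  have hr0 : 0 < r := div_pos (by nlinarith) h1α
  have hr1 : r < 1 := by rw [hrdef, div_lt_one h1α]; nlinarith
  -- basic bounds 0 ≤ p t ≤ 1
  have hbd : ∀ t, 0 ≤ survivalProb α t ∧ survivalProb α t ≤ 1 := by
    intro t
    induction t with
    | zero => simp [survivalProb]
    | succ t ih =>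
      obtain ⟨h0, h1⟩ := ih
      have hd : 0 < (1 - α) + α * survivalProb α t := by nlinarith
      constructor
      · show 0 ≤ (α * (2 - α) * survivalProb α t - α * (1 - α) * (survivalProb α t) ^ 2) /
            ((1 - α) + α * survivalProb α t)
        apply div_nonneg _ hd.le
        nlinarith [mul_nonneg hα0.le h0,
          mul_nonneg (mul_nonneg (mul_nonneg hα0.le h1α.le) h0) (sub_nonneg.mpr h1)]
      · show (α * (2 - α) * survivalProb α t - α * (1 - α) * (survivalProb α t) ^ 2) /
            ((1 - α) + α * survivalProb α t) ≤ 1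
        rw [div_le_one hd]
        have key : 0 ≤ 1 - α * survivalProb α t * (1 - survivalProb α t) := by
          nlinarith [mul_nonneg hα0.le (sq_nonneg (2 * survivalProb α t - 1))]
        nlinarith [mul_nonneg h1α.le key]
  -- contraction step
  have hstep : ∀ t, survivalProb α (t + 1) ≤ r * survivalProb α t := by
    intro t
    obtain ⟨h0, h1⟩ := hbd t
    have hd : 1 - α ≤ (1 - α) + α * survivalProb α t := by nlinarith
    have hnumle : α * (2 - α) * survivalProb α t - α * (1 - α) * (survivalProb α t) ^ 2 ≤
        α * (2 - α) * survivalProb α t := by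
      nlinarith [mul_nonneg (mul_nonneg hα0.le h1α.le) (sq_nonneg (survivalProb α t))]
    have hnum0 : 0 ≤ α * (2 - α) * survivalProb α t := by nlinarith
    have : (α * (2 - α) * survivalProb α t - α * (1 - α) * (survivalProb α t) ^ 2) /
        ((1 - α) + α * survivalProb α t) ≤ α * (2 - α) * survivalProb α t / (1 - α) :=
      div_le_div₀ hnum0 hnumle h1α hd
    calc survivalProb α (t + 1)
        = (α * (2 - α) * survivalProb α t - α * (1 - α) * (survivalProb α t) ^ 2) /
            ((1 - α) + α * survivalProb α t) := rfl
      _ ≤ α * (2 - α) * survivalProb α t / (1 - α) := this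
      _ = r * survivalProb α t := by rw [hrdef]; ring
  -- geometric majorant
  have hle : ∀ t, survivalProb α t ≤ r ^ t := by
    intro t
    induction t with
    | zero => simp [survivalProb]
    | succ t ih =>
      calc survivalProb α (t + 1) ≤ r * survivalProb α t := hstep t
        _ ≤ r * r ^ t := by nlinarith [(hbd t).1]
        _ = r ^ (t + 1) := by ring
  have hgeo : Summable (fun t : ℕ => r ^ t) := summable_geometric_of_lt_one hr0.le hr1
  have hS : Summable (fun t : ℕ => survivalProb α t) :=
    Summable.of_nonneg_of_le (fun t => (hbd t).1) hle hgeo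
  refine ⟨hS, ?_, ?_⟩
  all_goals {
    have hS1 : Summable (fun t : ℕ => survivalProb α (t + 1)) :=
      (summable_nat_add_iff 1).mpr hS
    have hS2 : Summable (fun t : ℕ => survivalProb α (t + 2)) :=
      (summable_nat_add_iff 2).mpr hS
    have hp1 : survivalProb α 1 = α := by
      show (α * (2 - α) * 1 - α * (1 - α) * (1 : ℝ) ^ 2) / ((1 - α) + α * 1) = α
      field_simp
      ring
    have hp2 : survivalProb α 2 = α ^ 2 * (2 - 2 * α + α ^ 2) / (1 - α + α ^ 2) := by
      show (α * (2 - α) * survivalProb α 1 - α * (1 - α) * (survivalProb α 1) ^ 2) /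
          ((1 - α) + α * survivalProb α 1) = _
      rw [hp1]
      rw [div_eq_div_iff (by nlinarith) (by positivity)]
      ring
    have htail : ∀ t, survivalProb α (t + 2) ≤ survivalProb α 2 * r ^ t := by
      intro t
      induction t with
      | zero => simp
      | succ t ih =>
        calc survivalProb α (t + 1 + 2) = survivalProb α ((t + 2) + 1) := by ring_nf
          _ ≤ r * survivalProb α (t + 2) := hstep (t + 2)
          _ ≤ r * (survivalProb α 2 * r ^ t) := by
              exact mul_le_mul_of_nonneg_left ih hr0.le
          _ = survivalProb α 2 * r ^ (t + 1) := by ring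
    have htailsum : (∑' t : ℕ, survivalProb α (t + 2)) ≤ survivalProb α 2 * (1 - r)⁻¹ := by
      calc (∑' t : ℕ, survivalProb α (t + 2))
          ≤ ∑' t : ℕ, survivalProb α 2 * r ^ t :=
            Summable.tsum_le_tsum htail hS2 (hgeo.mul_left _)
        _ = survivalProb α 2 * ∑' t : ℕ, r ^ t := tsum_mul_left
        _ = survivalProb α 2 * (1 - r)⁻¹ := by
            rw [tsum_geometric_of_lt_one hr0.le hr1]
    have hsplit : (∑' t : ℕ, survivalProb α t) =
        1 + α + ∑' t : ℕ, survivalProb α (t + 2) := by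
      rw [Summable.tsum_eq_zero_add hS, Summable.tsum_eq_zero_add hS1]
      have h0 : survivalProb α 0 = 1 := rfl
      have h01 : survivalProb α (0 + 1) = α := hp1
      rw [h0, h01, ← add_assoc]
    have hinv : (1 - r)⁻¹ = (1 - α) / (1 - 3 * α + α ^ 2) := by
      have : 1 - r = (1 - 3 * α + α ^ 2) / (1 - α) := by
        rw [hrdef]; field_simp; ring
      rw [this, inv_div]
    have hbound : (∑' t : ℕ, survivalProb α t) ≤
        (1 - 3 * α + 3 * α ^ 2 - 3 * α ^ 3) / ((1 - 3 * α + α ^ 2) * (1 - α + α ^ 2)) := by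
      rw [hsplit]
      have : 1 + α + survivalProb α 2 * (1 - r)⁻¹ =
          (1 - 3 * α + 3 * α ^ 2 - 3 * α ^ 3) / ((1 - 3 * α + α ^ 2) * (1 - α + α ^ 2)) := by
        rw [hp2, hinv]
        rw [div_mul_div_comm, add_div' _ _ _ (mul_pos hden2 hq).ne',
          div_eq_div_iff (mul_pos hden2 hq).ne' (mul_pos hq hden2).ne']
        ring
      rw [← this]
      exact add_le_add_right htailsum _
    first
    | exact hbound
    | {
      have hSge1 : (1 : ℝ) ≤ ∑' t : ℕ, survivalProb α t := by
        have := Summable.le_tsum hS 0 (fun i _ => (hbd i).1)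
        simpa [survivalProb] using this
      have hSpos : (0 : ℝ) < ∑' t : ℕ, survivalProb α t := by linarith
      have hBinv : 1 / ((1 - 3 * α + 3 * α ^ 2 - 3 * α ^ 3) /
          ((1 - 3 * α + α ^ 2) * (1 - α + α ^ 2))) ≤ 1 / (∑' t : ℕ, survivalProb α t) :=
        one_div_le_one_div_of_le hSpos hbound
      have hBeq : 1 - 1 / ((1 - 3 * α + 3 * α ^ 2 - 3 * α ^ 3) /
          ((1 - 3 * α + α ^ 2) * (1 - α + α ^ 2))) =
          α * ((1 - 2 * α + α ^ 2 - α ^ 3) / (1 - 3 * α + 3 * α ^ 2 - 3 * α ^ 3)) := by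
        rw [one_div_div, one_sub_div hN.ne', ← mul_div_assoc,
          div_eq_div_iff hN.ne' hN.ne']
        ring
      rw [← hBeq]
      exact sub_le_sub_left hBinv 1
    }
  }
end

section
/- Let α ∈ (0, 0.38] and define the sequence p₀ = 1 and p_t = (α(2−α)p_{t−1} − α(1−α)p_{t−1}²) / ((1−α) + α p_{t−1}) for t ≥ 1. Then the tail sum satisfies Σ_{t=3001}^∞ p_t < 10^{−7}. -/
lemma survivalProb_bounds (α : ℝ) (hα : α ∈ Set.Ioc (0 : ℝ) 0.38) (t : ℕ) :
    0 ≤ survivalProb α t ∧ survivalProb α t ≤ ((1539:ℝ)/1550) ^ t := by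
  obtain ⟨hα0, hα1⟩ := hα
  induction t with
  | zero => simp [survivalProb]
  | succ t ih =>
    obtain ⟨hp0, hpq⟩ := ih
    set p := survivalProb α t with hp
    have hq0 : (0:ℝ) ≤ ((1539:ℝ)/1550) ^ t := by positivity
    have hq1 : ((1539:ℝ)/1550) ^ t ≤ 1 := pow_le_one₀ (by norm_num) (by norm_num)
    have hp1 : p ≤ 1 := hpq.trans hq1
    have hD : (0:ℝ) < (1 - α) + α * p := by nlinarith
    have h5 : 0 ≤ (2 - α) - (1 - α) * p := by nlinarith [mul_nonneg (by linarith : (0:ℝ) ≤ 1 - α) (by linarith : (0:ℝ) ≤ 1 - p)]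
    have hN : 0 ≤ α * (2 - α) * p - α * (1 - α) * p ^ 2 := by
      nlinarith [mul_nonneg (mul_nonneg hα0.le hp0) h5]
    constructor
    · exact div_nonneg hN hD.le
    · show (α * (2 - α) * p - α * (1 - α) * p ^ 2) / ((1 - α) + α * p)
        ≤ ((1539:ℝ)/1550) ^ (t + 1)
      rw [div_le_iff₀ hD, pow_succ ((1539:ℝ)/1550) t]
      have h2 : α * (2 - α) ≤ (1539/1550) * (1 - α) := by nlinarith [mul_nonneg (by linarith : (0:ℝ) ≤ 19 - 50 * α) (by linarith : (0:ℝ) ≤ 81 - 31 * α)]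
      have h3 : α * (2 - α) * ((1539:ℝ)/1550) ^ t ≤ (1539/1550) * (1 - α) * ((1539:ℝ)/1550) ^ t :=
        mul_le_mul_of_nonneg_right h2 hq0
      have h4 : 0 ≤ α * (2 - α) * (((1539:ℝ)/1550) ^ t - p) :=
        mul_nonneg (by nlinarith) (by linarith)
      nlinarith [mul_nonneg (mul_nonneg (mul_nonneg (by norm_num : (0:ℝ) ≤ 1539/1550) hα0.le) hp0) hq0,
        mul_nonneg (mul_nonneg (mul_nonneg hα0.le (by linarith : (0:ℝ) ≤ 1 - α)) hp0) hp0]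

/-- For `α ∈ (0, 0.38]`, the tail sum `Σ_{t=3001}^∞ p_t` is less
than `10⁻⁷`. -/
theorem survivalProb_tail_sum_small (α : ℝ) (hα : α ∈ Set.Ioc (0 : ℝ) 0.38) :
    Summable (fun t : ℕ => survivalProb α (t + 3001)) ∧
    (∑' t : ℕ, survivalProb α (t + 3001)) < 1 / 10 ^ 7 := by
  have key := survivalProb_bounds α hα
  have hle : ∀ t : ℕ, survivalProb α (t + 3001) ≤ ((1539:ℝ)/1550) ^ 3001 * ((1539:ℝ)/1550) ^ t := by
    intro t
    have := (key (t + 3001)).2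
    calc survivalProb α (t + 3001) ≤ ((1539:ℝ)/1550) ^ (t + 3001) := this
      _ = ((1539:ℝ)/1550) ^ 3001 * ((1539:ℝ)/1550) ^ t := by ring
  have hgeo : Summable (fun t : ℕ => ((1539:ℝ)/1550) ^ 3001 * ((1539:ℝ)/1550) ^ t) :=
    (summable_geometric_of_lt_one (by norm_num) (by norm_num)).mul_left _
  have hs : Summable (fun t : ℕ => survivalProb α (t + 3001)) :=
    Summable.of_nonneg_of_le (fun t => (key (t + 3001)).1) hle hgeo
  refine ⟨hs, ?_⟩
  have h1 : (∑' t : ℕ, survivalProb α (t + 3001)) ≤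
      ∑' t : ℕ, ((1539:ℝ)/1550) ^ 3001 * ((1539:ℝ)/1550) ^ t :=
    Summable.tsum_le_tsum hle hs hgeo
  have h2 : (∑' t : ℕ, ((1539:ℝ)/1550) ^ 3001 * ((1539:ℝ)/1550) ^ t)
      = ((1539:ℝ)/1550) ^ 3001 * (1 - 1539/1550)⁻¹ := by
    rw [tsum_mul_left, tsum_geometric_of_lt_one (by norm_num) (by norm_num)]
  have h3 : ((1539:ℝ)/1550) ^ 3001 * (1 - 1539/1550)⁻¹ < 1 / 10 ^ 7 := by
    have : ((1539:ℝ)/1550)^3001 < 11/(1550*10^7) := by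
      rw [show 3001 = 1 + 250 * 12 by norm_num, pow_add, pow_mul]; norm_num
    rw [show (1 - (1539:ℝ)/1550)⁻¹ = 1550/11 by norm_num]
    generalize ((1539:ℝ)/1550)^3001 = y at this ⊢
    nlinarith
  exact lt_of_le_of_lt (h2 ▸ h1) h3
end

section
/- Let α ∈ (0, 0.29], let k ≥ 1 be a natural number, and suppose ν ∈ [0, α] satisfies ν = α(1−α) + (1−α) ν² Σ_{i=0}^{k−1} ν^i. Then ν ≥ α − α^{k+1}. -/
private lemma aux_pow (α ν : ℝ) (h0 : 0 ≤ ν) (h1 : ν ≤ α) (n : ℕ) :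
    α ^ (n + 1) - ((n : ℝ) + 1) * α ^ n * (α - ν) ≤ ν ^ (n + 1) := by
  induction n with
  | zero => simp
  | succ n ih =>
    have hα0 : 0 ≤ α := le_trans h0 h1
    have h3 : 0 ≤ ((n : ℝ) + 1) * α ^ n * (α - ν) ^ 2 :=
      mul_nonneg (mul_nonneg (by positivity) (pow_nonneg hα0 n)) (sq_nonneg _)
    have h4 : ν * (α * α ^ n - ((n : ℝ) + 1) * α ^ n * (α - ν)) ≤ ν * ν ^ (n + 1) := by
      have e3 : α ^ (n + 1) = α * α ^ n := by ring
      rw [← e3]; exact mul_le_mul_of_nonneg_left ih h0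
    have goal' : α * (α * α ^ n) - ((n : ℝ) + 2) * (α * α ^ n) * (α - ν) ≤ ν * ν ^ (n + 1) := by
      nlinarith [h3, h4]
    push_cast
    calc α ^ (n + 1 + 1) - ((n : ℝ) + 1 + 1) * α ^ (n + 1) * (α - ν)
        = α * (α * α ^ n) - ((n : ℝ) + 2) * (α * α ^ n) * (α - ν) := by ring
      _ ≤ ν * ν ^ (n + 1) := goal'
      _ = ν ^ (n + 1 + 1) := by ring

private lemma sum_I1 (α : ℝ) (k : ℕ) :
    (1 - α) * ∑ i ∈ Finset.range k, α ^ (i + 2) = α ^ 2 - α ^ (k + 2) := by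
  induction k with
  | zero => simp
  | succ k ih =>
    rw [Finset.sum_range_succ, mul_add, ih]
    ring

private lemma sum_I2 (α : ℝ) (k : ℕ) :
    (1 - α) ^ 2 * ∑ i ∈ Finset.range k, ((i : ℝ) + 2) * α ^ (i + 1)
      = 2 * α - α ^ 2 - ((k : ℝ) + 2) * α ^ (k + 1) + ((k : ℝ) + 1) * α ^ (k + 2) := by
  induction k with
  | zero => norm_num
  | succ k ih =>
    rw [Finset.sum_range_succ, mul_add, ih]
    push_cast
    ring

/-- For `α ∈ (0, 0.29]`, `k ≥ 1`, and `ν ∈ [0, α]` satisfying the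
fixed-point equation `ν = α(1-α) + (1-α)ν² Σ_{i=0}^{k-1} ν^i`, one has
`ν ≥ α - α^{k+1}`. -/
theorem fixed_point_lower_bound (α : ℝ) (hα : α ∈ Set.Ioc (0 : ℝ) 0.29)
    (k : ℕ) (hk : 1 ≤ k) (ν : ℝ) (hν : ν ∈ Set.Icc (0 : ℝ) α)
    (heq : ν = α * (1 - α) + (1 - α) * ν ^ 2 * ∑ i ∈ Finset.range k, ν ^ i) :
    α - α ^ (k + 1) ≤ ν := by
  obtain ⟨hα0, hα29⟩ := hα
  obtain ⟨hν0, hνα⟩ := hν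
  have hα1 : (0:ℝ) < 1 - α := by linarith
  have hsum : ν ^ 2 * ∑ i ∈ Finset.range k, ν ^ i = ∑ i ∈ Finset.range k, ν ^ (i + 2) := by
    rw [Finset.mul_sum]
    refine Finset.sum_congr rfl fun i _ => ?_
    ring
  have hB' : ∑ i ∈ Finset.range k, (α ^ (i + 2) - (α - ν) * (((i : ℝ) + 2) * α ^ (i + 1)))
      ≤ ∑ i ∈ Finset.range k, ν ^ (i + 2) := by
    refine Finset.sum_le_sum fun i _ => ?_
    have h := aux_pow α ν hν0 hνα (i + 1)
    push_cast at h
    have e1 : α ^ (i + 1 + 1) = α ^ (i + 2) := by ring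
    have e2 : ν ^ (i + 1 + 1) = ν ^ (i + 2) := by ring
    rw [e1, e2] at h
    linarith [h]
  rw [Finset.sum_sub_distrib, ← Finset.mul_sum] at hB'
  set A := ∑ i ∈ Finset.range k, α ^ (i + 2) with hA
  set T := ∑ i ∈ Finset.range k, ((i : ℝ) + 2) * α ^ (i + 1) with hT
  have h1 : (1 - α) * A = α ^ 2 - α ^ (k + 2) := sum_I1 α k
  have h2 : (1 - α) ^ 2 * T = 2 * α - α ^ 2 - ((k : ℝ) + 2) * α ^ (k + 1)
      + ((k : ℝ) + 1) * α ^ (k + 2) := sum_I2 α k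
  have hp : (0:ℝ) ≤ α ^ (k + 1) := pow_nonneg hα0.le _
  have hr : 0 ≤ ((k : ℝ) + 2) * α ^ (k + 1) - ((k : ℝ) + 1) * α ^ (k + 2) := by
    have e : α ^ (k + 2) = α * α ^ (k + 1) := by ring
    rw [e]
    have hk1 : (0:ℝ) ≤ (k : ℝ) + 1 := by positivity
    nlinarith [hp, mul_nonneg (mul_nonneg hk1 (by linarith : (0:ℝ) ≤ 1 - α)) hp]
  have hquad : 2 * α - α ^ 2 ≤ (1 - α) ^ 2 := by
    nlinarith [mul_nonneg (by linarith : (0:ℝ) ≤ 0.29 - α) (by linarith : (0:ℝ) ≤ 3.42 - 2 * α)]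
  have hT1 : (1 - α) ^ 2 * T ≤ (1 - α) ^ 2 := by linarith
  have hTle : (1 - α) * T ≤ 1 - α := by
    have hT1' : T ≤ 1 := by
      have hsq : (0:ℝ) < (1 - α) ^ 2 := by positivity
      nlinarith [hT1, hsq]
    nlinarith [hT1', hα1]
  have hchain : α * (1 - α) + (1 - α) * (A - (α - ν) * T) ≤ ν := by
    have hm := mul_le_mul_of_nonneg_left hB' hα1.le
    calc α * (1 - α) + (1 - α) * (A - (α - ν) * T)
        ≤ α * (1 - α) + (1 - α) * (∑ i ∈ Finset.range k, ν ^ (i + 2)) := by linarith [hm]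
      _ = α * (1 - α) + (1 - α) * (ν ^ 2 * ∑ i ∈ Finset.range k, ν ^ i) := by rw [hsum]
      _ = ν := by conv_rhs => rw [heq]
                  ring

  have hmain : (α - ν) * (1 - (1 - α) * T) ≤ α ^ (k + 2) := by nlinarith [hchain, h1]
  have hfac : (α - ν) * α ≤ (α - ν) * (1 - (1 - α) * T) := by
    have hεn : (0:ℝ) ≤ α - ν := by linarith
    nlinarith [hεn, hTle]
  have hfin : (α - ν) * α ≤ α ^ (k + 1) * α := by
    have e : α ^ (k + 2) = α ^ (k + 1) * α := by ring
    linarith [hfac, hmain, e.le, e.ge]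
  have := le_of_mul_le_mul_right hfin hα0
  linarith
end
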